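/- Let F be a field, k ≥ 2, 1 ≤ h ≤ k-1, and let α₁,…,α_{k-1} ∈ F be pairwise distinct. Set q(x) = x^{h-1} + ∑_{t=0}^{l} η_t x^{k+t-1} and g(x) = ∏_{i=1}^{k-1}(x - αᵢ), and write q(x) mod g(x) = r(x) = ∑_{i=0}^{k-2} rᵢ xⁱ. Let à be the (k-1)×(k-1) matrix whose rows are (α₁^{s},…,α_{k-1}^{s}) for s = 0,…,k-2 except that row h (power index h-1 replaced) is (q(α₁),…,q(α_{k-1})). Then det(Ã) = r_{h-1} · ∏_{1≤i<j≤k-1}(αⱼ - αᵢ). In particular à is invertible iff r_{h-1} ≠ 0. -/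

import Mathlib

/-!
Since `g` vanishes at every `αⱼ`, the row `(q(αⱼ))ⱼ` equals `(r(αⱼ))ⱼ`, and as `deg r < k - 1`
this row is the combination `∑ᵢ rᵢ • (αⱼ^i)ⱼ` of the Vandermonde rows. Multilinearity of the
determinant kills every term but `i = h - 1`, leaving `r_{h-1}` times the Vandermonde determinant,
which is nonzero exactly because the `αᵢ` are distinct.
-/

open Polynomial
open scoped Matrix

namespace Polynomial

variable {R : Type*} [CommRing R]

theorem eval_modByMonic_prod_X_sub_C {ι : Type*} [Fintype ι] (p : R[X]) (α : ι → R) (j : ι) :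
    (p %ₘ ∏ i, (X - C (α i))).eval (α j) = p.eval (α j) :=
  eval₂_modByMonic_eq_self_of_root <| by
    simpa [eval_prod] using Finset.prod_eq_zero (Finset.mem_univ j) (by simp)

theorem natDegree_modByMonic_prod_X_sub_C_lt [Nontrivial R] {n : ℕ} (hn : n ≠ 0) (p : R[X])
    (α : Fin n → R) : (p %ₘ ∏ i, (X - C (α i))).natDegree < n := by
  have hmonic : (∏ i, (X - C (α i))).Monic := monic_prod_of_monic _ _ fun i _ => monic_X_sub_C _
  have hdeg : (∏ i, (X - C (α i))).natDegree = n := by simp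
  calc _ < (∏ i, (X - C (α i))).natDegree :=
        natDegree_modByMonic_lt p hmonic fun h => hn (by rw [← hdeg, h, natDegree_one])
    _ = n := hdeg

end Polynomial

namespace Matrix

variable {R : Type*} [CommRing R] {n : ℕ}

theorem det_updateRow_vandermonde_transpose_eval (α : Fin n → R) (s : Fin n) {p : R[X]}
    (hp : p.natDegree < n) :
    ((vandermonde α)ᵀ.updateRow s fun j => p.eval (α j)).det = p.coeff s * (vandermonde α).det := by
  have hrow : (fun j => p.eval (α j)) = ∑ i : Fin n, p.coeff i • (vandermonde α)ᵀ i := by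
    ext j
    simp [eval_eq_sum_range' hp, Finset.sum_range fun i => p.coeff i * α j ^ i, vandermonde_apply]
  rw [hrow, det_updateRow_sum, det_transpose, smul_eq_mul]

theorem det_updateRow_vandermonde_transpose_eval_modByMonic (α : Fin n → R) (s : Fin n) (p : R[X]) :
    ((vandermonde α)ᵀ.updateRow s fun j => p.eval (α j)).det =
      (p %ₘ ∏ i, (X - C (α i))).coeff s * (vandermonde α).det := by
  nontriviality R
  simp_rw [← eval_modByMonic_prod_X_sub_C p α]
  exact det_updateRow_vandermonde_transpose_eval α s
    (natDegree_modByMonic_prod_X_sub_C_lt (Fin.pos s).ne' p α)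

end Matrix

open Polynomial in
theorem stmt_12_general {F : Type*} [Field F] (k h : ℕ)
    (hh1 : 1 ≤ h) (hh2 : h ≤ k - 1) (α : Fin (k - 1) → F)
    (hα : Function.Injective α)
    (q g : Polynomial F)
    (hg : g = ∏ i, (X - C (α i)))
    (A : Matrix (Fin (k - 1)) (Fin (k - 1)) F)
    (hA : ∀ s j, A s j = if (s : ℕ) = h - 1 then q.eval (α j) else α j ^ (s : ℕ)) :
    A.det = (q %ₘ g).coeff (h - 1) *
        ∏ m : Fin (k - 1), ∏ j ∈ Finset.Ioi m, (α j - α m)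
    ∧ (A.det ≠ 0 ↔ (q %ₘ g).coeff (h - 1) ≠ 0) := by
  set s : Fin (k - 1) := ⟨h - 1, by omega⟩
  have hAV : A = (Matrix.vandermonde α)ᵀ.updateRow s fun j => q.eval (α j) := by
    ext i j
    rw [hA]
    by_cases hi : i = s
    · simp [hi, s]
    · have hi' : (i : ℕ) ≠ h - 1 := fun h' => hi (Fin.ext h')
      simp [Matrix.updateRow_ne hi, Matrix.vandermonde_apply, hi']
  have hdet : A.det = (q %ₘ g).coeff (h - 1) * (Matrix.vandermonde α).det := by
    rw [hAV, hg, Matrix.det_updateRow_vandermonde_transpose_eval_modByMonic]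
  rw [hdet, ← Matrix.det_vandermonde, mul_ne_zero_iff]
  exact ⟨rfl, and_iff_left (Matrix.det_vandermonde_ne_zero_iff.mpr hα)⟩

open Polynomial in
theorem stmt_12 {F : Type*} [Field F] (k l h : ℕ) (hk : 2 ≤ k)
    (hh1 : 1 ≤ h) (hh2 : h ≤ k - 1) (α : Fin (k - 1) → F)
    (hα : Function.Injective α) (η : ℕ → F)
    (q g : Polynomial F)
    (hq : q = X ^ (h - 1) + ∑ t ∈ Finset.range (l + 1), C (η t) * X ^ (k + t - 1))
    (hg : g = ∏ i, (X - C (α i)))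
    (A : Matrix (Fin (k - 1)) (Fin (k - 1)) F)
    (hA : ∀ s j, A s j = if (s : ℕ) = h - 1 then q.eval (α j) else α j ^ (s : ℕ)) :
    A.det = (q %ₘ g).coeff (h - 1) *
        ∏ m : Fin (k - 1), ∏ j ∈ Finset.Ioi m, (α j - α m)
    ∧ (A.det ≠ 0 ↔ (q %ₘ g).coeff (h - 1) ≠ 0) :=
  stmt_12_general k h hh1 hh2 α hα q g hg A hA
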